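/- Let X be a real Banach space, q ∈ [1,∞), and suppose X has property (m_q*). Suppose moreover that there exists a sequence (e_n*) in X* with ‖e_n*‖ = 1 for all n that converges to 0 in the weak* topology. Then for every ε ∈ (0,2), (1 − (ε/2)^q)^{1/q} · B_{X*} ⊆ s_ε B_{X*}, i.e. every x* ∈ X* with ‖x*‖ ≤ (1 − (ε/2)^q)^{1/q} belongs to s_ε B_{X*}. -/

import Mathlib

open Filter Topology Metric

/-- The ε-Szlenk derivation of the closed dual unit ball of `X`. -/
def szlenkDeriv (X : Type*) [NormedAddCommGroup X] [NormedSpace ℝ X] (ε : ℝ) :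
    Set (StrongDual ℝ X) :=
  {x : StrongDual ℝ X | ‖x‖ ≤ 1 ∧
    ∀ V : Set (StrongDual ℝ X),
      IsOpen ((StrongDual.toWeakDual '' V : Set (WeakDual ℝ X))) → x ∈ V →
        ε < Metric.diam (Metric.closedBall (0 : StrongDual ℝ X) 1 ∩ V)}

/-- A sequence in the dual is weak*-null if it tends to `0` in the weak* topology. -/
def WeakStarNull {X : Type*} [NormedAddCommGroup X] [NormedSpace ℝ X]
    (u : ℕ → StrongDual ℝ X) : Prop :=
  Filter.Tendsto (fun n => StrongDual.toWeakDual (u n)) Filter.atTop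
    (nhds (0 : WeakDual ℝ X))


/-- Kalton–Werner property (m_q*). -/
def PropmqStar (X : Type*) [NormedAddCommGroup X] [NormedSpace ℝ X] (q : ℝ) : Prop :=
  ∀ x : StrongDual ℝ X, ∀ u : ℕ → StrongDual ℝ X, WeakStarNull u →
    Filter.limsup (fun n => ‖x + u n‖) Filter.atTop
      = (‖x‖ ^ q + (Filter.limsup (fun n => ‖u n‖) Filter.atTop) ^ q) ^ (1 / q)

/-!
Shrink `x` slightly inside the weak*-open set `V` to a point `x'` with `‖x'‖ < (1 - (ε/2)^q)^(1/q)`,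
and pick `t > ε/2` with `‖x'‖^q + t^q < 1`. By (m_q*), `limsup ‖x' ± t e_n‖ = (‖x'‖^q + t^q)^(1/q) < 1`,
while `x' ± t e_n → x'` weak*. So for large `n` both points lie in `B_{X*} ∩ V`, at distance `2t > ε`.
-/

theorem exists_mem_norm_lt_of_isOpen {E : Type*} [NormedAddCommGroup E] [NormedSpace ℝ E]
    {V : Set E} (hV : IsOpen V) {x : E} (hx : x ∈ V) {r : ℝ} (hr : r ≠ 0) (hxr : ‖x‖ ≤ r) :
    ∃ y ∈ V, ‖y‖ < r := by
  have hx_closure : x ∈ closure (ball 0 r) := by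
    rw [closure_ball _ hr]
    exact mem_closedBall_zero_iff.mpr hxr
  obtain ⟨y, hyV, hy⟩ := mem_closure_iff.mp hx_closure V hV hx
  exact ⟨y, hyV, mem_ball_zero_iff.mp hy⟩

section

variable {X : Type*} [NormedAddCommGroup X] [NormedSpace ℝ X]

theorem StrongDual.isOpen_of_isOpen_image_toWeakDual {V : Set (StrongDual ℝ X)}
    (hV : IsOpen (StrongDual.toWeakDual '' V : Set (WeakDual ℝ X))) : IsOpen V := by
  rw [← Set.preimage_image_eq V (StrongDual.toWeakDual (𝕜 := ℝ) (E := X)).injective]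
  exact hV.preimage NormedSpace.Dual.toWeakDual_continuous

theorem WeakStarNull.const_smul {u : ℕ → StrongDual ℝ X} (hu : WeakStarNull u) (c : ℝ) :
    WeakStarNull fun n => c • u n := by
  simpa only [WeakStarNull, map_smul, smul_zero] using Filter.Tendsto.const_smul hu c

theorem WeakStarNull.neg {u : ℕ → StrongDual ℝ X} (hu : WeakStarNull u) :
    WeakStarNull fun n => -u n := by
  simpa only [WeakStarNull, map_neg, neg_zero] using Filter.Tendsto.neg hu

theorem WeakStarNull.eventually_add_mem {u : ℕ → StrongDual ℝ X} (hu : WeakStarNull u)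
    {V : Set (StrongDual ℝ X)} (hV : IsOpen (StrongDual.toWeakDual '' V : Set (WeakDual ℝ X)))
    {x : StrongDual ℝ X} (hx : x ∈ V) : ∀ᶠ n in atTop, x + u n ∈ V := by
  have hlim : Tendsto (fun n => StrongDual.toWeakDual (x + u n)) atTop
      (𝓝 (StrongDual.toWeakDual x)) := by
    simpa only [map_add, add_zero] using (tendsto_const_nhds (x := StrongDual.toWeakDual x)).add hu
  filter_upwards [hlim.eventually (hV.mem_nhds ⟨x, hx, rfl⟩)] with n hn
  exact (StrongDual.toWeakDual (𝕜 := ℝ) (E := X)).injective.mem_set_image.mp hn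

theorem lt_diam_closedBall_inter_of_weakStarNull {V : Set (StrongDual ℝ X)}
    (hV : IsOpen (StrongDual.toWeakDual '' V : Set (WeakDual ℝ X))) {x : StrongDual ℝ X}
    (hx : x ∈ V) {u : ℕ → StrongDual ℝ X} (hu : WeakStarNull u) {ε : ℝ}
    (hball : ∀ᶠ n in atTop, ‖x + u n‖ ≤ 1 ∧ ‖x - u n‖ ≤ 1)
    (hlarge : ∀ᶠ n in atTop, ε < 2 * ‖u n‖) :
    ε < diam (closedBall (0 : StrongDual ℝ X) 1 ∩ V) := by
  obtain ⟨n, ⟨hplus, hminus⟩, hεn, hplusV, hminusV⟩ :=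
    (hball.and (hlarge.and ((hu.eventually_add_mem hV hx).and
      (hu.neg.eventually_add_mem hV hx)))).exists
  rw [← sub_eq_add_neg] at hminusV
  have hdist : dist (x + u n) (x - u n) = 2 * ‖u n‖ := by
    rw [dist_eq_norm, add_sub_sub_cancel, ← two_smul ℝ (u n), norm_smul, Real.norm_two]
  calc ε < dist (x + u n) (x - u n) := hdist ▸ hεn
    _ ≤ _ := dist_le_diam_of_mem (isBounded_closedBall.subset Set.inter_subset_left)
        ⟨mem_closedBall_zero_iff.mpr hplus, hplusV⟩ ⟨mem_closedBall_zero_iff.mpr hminus, hminusV⟩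

theorem PropmqStar.eventually_norm_add_lt {q : ℝ} (hmq : PropmqStar X q) {x : StrongDual ℝ X}
    {u : ℕ → StrongDual ℝ X} (hu : WeakStarNull u) {t : ℝ} (hnorm : ∀ n, ‖u n‖ = t) {c : ℝ}
    (hlt : (‖x‖ ^ q + t ^ q) ^ (1 / q) < c) : ∀ᶠ n in atTop, ‖x + u n‖ < c := by
  have hlimsup : limsup (fun n => ‖x + u n‖) atTop = (‖x‖ ^ q + t ^ q) ^ (1 / q) := by
    simpa only [hnorm, limsup_const] using hmq x u hu
  refine eventually_lt_of_limsup_lt (hlimsup ▸ hlt) (isBoundedUnder_of ⟨‖x‖ + t, fun n => ?_⟩)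
  exact (norm_add_le _ _).trans_eq (by rw [hnorm])

end

theorem exists_lt_rpow_add_rpow_lt_one {q a b : ℝ} (hq : 0 < q) (ha : 0 ≤ a) (hb : 0 ≤ b)
    (hb1 : b ≤ 1) (hab : a < (1 - b ^ q) ^ (1 / q)) : ∃ t, b < t ∧ a ^ q + t ^ q < 1 := by
  have hsum : a ^ q + b ^ q < 1 := by
    have h1b : 0 ≤ 1 - b ^ q := sub_nonneg.mpr (Real.rpow_le_one hb hb1 hq.le)
    have := Real.rpow_lt_rpow ha hab hq
    rw [one_div, Real.rpow_inv_rpow h1b hq.ne'] at this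
    linarith
  have hcont : ContinuousAt (fun t => a ^ q + t ^ q) b :=
    continuousAt_const.add (Real.continuousAt_rpow_const b q (Or.inr hq.le))
  exact ((eventually_mem_nhdsWithin (s := Set.Ioi b)).and
    ((hcont.mono_left nhdsWithin_le_nhds).eventually (gt_mem_nhds hsum))).exists

theorem ball_subset_szlenkDeriv_of_propmqStar (X : Type*) [NormedAddCommGroup X]
    [NormedSpace ℝ X]
    (q : ℝ) (hq : 1 ≤ q) (hmq : PropmqStar X q)
    (e : ℕ → StrongDual ℝ X) (he : ∀ n, ‖e n‖ = 1) (hnull : WeakStarNull e)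
    (ε : ℝ) (hε : ε ∈ Set.Ioo (0 : ℝ) 2) :
    ∀ x : StrongDual ℝ X, ‖x‖ ≤ (1 - (ε / 2) ^ q) ^ (1 / q) →
      x ∈ szlenkDeriv X ε := by
  intro x hx
  obtain ⟨hε0, hε2⟩ := hε
  have hq0 : 0 < q := one_pos.trans_le hq
  have hpow : 0 < 1 - (ε / 2) ^ q := sub_pos.mpr (Real.rpow_lt_one (by linarith) (by linarith) hq0)
  have hr1 : (1 - (ε / 2) ^ q) ^ (1 / q) ≤ 1 :=
    Real.rpow_le_one hpow.le (sub_le_self _ (by positivity)) (by positivity)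
  refine ⟨hx.trans hr1, fun V hV hxV => ?_⟩
  obtain ⟨x', hx'V, hx'⟩ := exists_mem_norm_lt_of_isOpen
    (StrongDual.isOpen_of_isOpen_image_toWeakDual hV) hxV (Real.rpow_pos_of_pos hpow _).ne' hx
  obtain ⟨t, hεt, hsum⟩ :=
    exists_lt_rpow_add_rpow_lt_one hq0 (norm_nonneg x') (by linarith) (by linarith) hx'
  have ht : 0 < t := by linarith
  have hnorm : ∀ n, ‖t • e n‖ = t := fun n => by
    rw [norm_smul, he, mul_one, Real.norm_of_nonneg ht.le]
  have hlt : (‖x'‖ ^ q + t ^ q) ^ (1 / q) < 1 := Real.rpow_lt_one (by positivity) hsum (by positivity)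
  have hu := hnull.const_smul t
  have hplus := hmq.eventually_norm_add_lt hu hnorm hlt
  have hminus := hmq.eventually_norm_add_lt hu.neg (by simpa only [norm_neg] using hnorm) hlt
  refine lt_diam_closedBall_inter_of_weakStarNull hV hx'V hu ?_ (.of_forall fun n => ?_)
  · filter_upwards [hplus, hminus] with n hplus' hminus'
    exact ⟨hplus'.le, (sub_eq_add_neg x' _ ▸ hminus').le⟩
  · rw [hnorm]; linarith
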